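/- No minimally nonperfectly divisible diamond-free graph contains a homogeneous set that is a clique of size 2. -/

import Mathlib

open SimpleGraph

variable {V : Type}

/-- The clique number of the subgraph of `G` induced on `S`. -/
noncomputable def omegaOn (G : SimpleGraph V) (S : Set V) : ℕ :=
  sSup {n | ∃ s : Finset V, ↑s ⊆ S ∧ G.IsNClique n s}

/-- The subgraph of `G` induced on `S` is a perfect graph. -/
def IsPerfectOn (G : SimpleGraph V) (S : Set V) : Prop :=
  ∀ T : Set V, T ⊆ S → (G.induce T).chromaticNumber = (omegaOn G T : ℕ∞)

/-- Every nonempty induced subgraph of `G[S]` admits a perfect division. -/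
def PerfDivOn (G : SimpleGraph V) (S : Set V) : Prop :=
  ∀ H : Set V, H ⊆ S → H.Nonempty →
    ∃ A B : Set V, A ∪ B = H ∧ Disjoint A B ∧
      IsPerfectOn G A ∧ omegaOn G B < omegaOn G H

/-- `G` is minimally nonperfectly divisible. -/
def MNPD (G : SimpleGraph V) : Prop :=
  ¬ PerfDivOn G Set.univ ∧ ∀ S : Set V, S ≠ Set.univ → PerfDivOn G S

/-- The external neighbourhood `N(X)`. -/
def extNbhd (G : SimpleGraph V) (X : Set V) : Set V :=
  {v | v ∉ X ∧ ∃ x ∈ X, G.Adj v x}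

/-- `G` has no induced diamond (`K₄` minus an edge). -/
def DiamondFree (G : SimpleGraph V) : Prop :=
  ¬ ∃ a b c d : V, [a, b, c, d].Nodup ∧
    G.Adj a b ∧ G.Adj a c ∧ G.Adj a d ∧ G.Adj b c ∧ G.Adj b d ∧ ¬ G.Adj c d

/-!
If `{x, y}` is a homogeneous edge, every other neighbour of `y` is a neighbour of `x`, so two
nonadjacent neighbours of `y` would span a diamond with `x` and `y`: hence `y` is simplicial.
A simplicial vertex `y` can be added to the perfect side of any perfect division of `G - y`:
it keeps that side perfect, since the neighbours of `y` in an induced subgraph `T` form a clique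
with `y`, so they use fewer than `ω(T)` colours and a colouring of `T - y` extends to `y`.
Hence `G` would be perfectly divisible, contradicting minimality.
-/

section CliqueNumber

theorem nonempty_setOf_isNClique_subset (G : SimpleGraph V) (S : Set V) :
    {n | ∃ s : Finset V, ↑s ⊆ S ∧ G.IsNClique n s}.Nonempty :=
  ⟨0, ∅, by simp⟩

variable [Fintype V] {G : SimpleGraph V}

theorem bddAbove_setOf_isNClique_subset (G : SimpleGraph V) (S : Set V) :
    BddAbove {n | ∃ s : Finset V, ↑s ⊆ S ∧ G.IsNClique n s} :=
  ⟨Fintype.card V, fun _ ⟨s, _, hs⟩ => hs.card_eq ▸ s.card_le_univ⟩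

theorem SimpleGraph.IsNClique.le_omegaOn {S : Set V} {n : ℕ} {s : Finset V}
    (hs : G.IsNClique n s) (hsS : ↑s ⊆ S) : n ≤ omegaOn G S :=
  le_csSup (bddAbove_setOf_isNClique_subset G S) ⟨s, hsS, hs⟩

theorem omegaOn_mono {S T : Set V} (h : S ⊆ T) : omegaOn G S ≤ omegaOn G T :=
  csSup_le (nonempty_setOf_isNClique_subset G S) fun _ ⟨_, hsS, hs⟩ =>
    hs.le_omegaOn (hsS.trans h)

theorem exists_isNClique_omegaOn (G : SimpleGraph V) (S : Set V) :
    ∃ s : Finset V, ↑s ⊆ S ∧ G.IsNClique (omegaOn G S) s :=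
  Nat.sSup_mem (nonempty_setOf_isNClique_subset G S) (bddAbove_setOf_isNClique_subset G S)

theorem omegaOn_le_chromaticNumber_induce (G : SimpleGraph V) (S : Set V) :
    (omegaOn G S : ℕ∞) ≤ (G.induce S).chromaticNumber := by
  classical
  obtain ⟨s, hsS, hs⟩ := exists_isNClique_omegaOn G S
  have hclique : (G.induce S).IsClique ↑(s.subtype (· ∈ S)) := by
    rw [isClique_induce_iff]
    convert hs.isClique
    ext v
    simpa using fun hv => hsS hv
  have hcard : (s.subtype (· ∈ S)).card = omegaOn G S := by
    rw [Finset.card_subtype, Finset.filter_true_of_mem fun v hv => hsS hv, hs.card_eq]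
  exact hcard ▸ hclique.card_le_chromaticNumber

end CliqueNumber

section Simplicial

variable {G : SimpleGraph V}

theorem SimpleGraph.colorable_induce_of_colorable_induce_diff_singleton [Finite V]
    {T : Set V} {y : V} {m : ℕ} (hC : (G.induce (T \ {y})).Colorable m)
    (hy : (G.neighborSet y ∩ T).ncard < m) : (G.induce T).Colorable m := by
  classical
  obtain ⟨C⟩ := hC
  set N : Set ↥(T \ {y}) := {w | G.Adj y w}
  have hN : (C '' N).ncard < m := calc
    (C '' N).ncard ≤ N.ncard := Set.ncard_image_le (Set.toFinite N)
    _ = (Subtype.val '' N).ncard := (Set.ncard_image_of_injective N Subtype.val_injective).symm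
    _ ≤ (G.neighborSet y ∩ T).ncard :=
      Set.ncard_le_ncard (by rintro _ ⟨w, hw, rfl⟩; exact ⟨hw, w.2.1⟩) (Set.toFinite _)
    _ < m := hy
  obtain ⟨c₀, -, hc₀⟩ := Set.exists_mem_notMem_of_ncard_lt_ncard (s := C '' N) (t := Set.univ)
    (by rwa [Set.ncard_univ, Nat.card_eq_fintype_card, Fintype.card_fin])
  refine ⟨Coloring.mk (fun v => if h : v.1 = y then c₀ else C ⟨v.1, v.2, h⟩) ?_⟩
  rintro ⟨v, hv⟩ ⟨w, hw⟩ (hvw : G.Adj v w)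
  by_cases hvy : v = y <;> by_cases hwy : w = y <;> simp only [hvy, hwy, dite_true, dite_false]
  · exact absurd (hvy ▸ hwy ▸ hvw) G.irrefl
  · exact fun h => hc₀ ⟨_, show G.Adj y w from hvy ▸ hvw, h.symm⟩
  · exact fun h => hc₀ ⟨_, show G.Adj y v from hwy ▸ hvw.symm, h⟩
  · exact C.valid (G := G.induce (T \ {y})) hvw

variable [Fintype V]

theorem ncard_neighborSet_inter_lt_omegaOn {T : Set V} {y : V}
    (hy : G.IsClique (G.neighborSet y)) (hyT : y ∈ T) :
    (G.neighborSet y ∩ T).ncard < omegaOn G T := by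
  classical
  set s := (Set.toFinite (G.neighborSet y ∩ T)).toFinset
  have hclique : G.IsNClique (s.card + 1) (insert y s) :=
    IsNClique.insert ⟨hy.subset (by simp [s]), rfl⟩ (by simp +contextual [s])
  have hsub : ↑(insert y s) ⊆ T := by
    simp only [Finset.coe_insert, Set.Finite.coe_toFinset, s]
    exact Set.insert_subset hyT Set.inter_subset_right
  rw [Set.ncard_eq_toFinset_card _ (Set.toFinite _)]
  exact hclique.le_omegaOn hsub

theorem IsPerfectOn.union_singleton {A : Set V} {y : V} (hA : IsPerfectOn G A)
    (hy : G.IsClique (G.neighborSet y)) : IsPerfectOn G (A ∪ {y}) := by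
  intro T hT
  by_cases hyT : y ∈ T
  · have hTA : T \ {y} ⊆ A := fun v ⟨hv, hvy⟩ => (hT hv).resolve_right hvy
    have hcol : (G.induce (T \ {y})).Colorable (omegaOn G T) := by
      rw [← chromaticNumber_le_iff_colorable, hA _ hTA]
      exact_mod_cast omegaOn_mono Set.sdiff_subset
    exact le_antisymm
      (colorable_induce_of_colorable_induce_diff_singleton hcol
        (ncard_neighborSet_inter_lt_omegaOn hy hyT)).chromaticNumber_le
      (omegaOn_le_chromaticNumber_induce G T)
  · exact hA T fun v hv => (hT hv).resolve_right (ne_of_mem_of_not_mem hv hyT)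

theorem perfDivOn_univ_of_isClique_neighborSet {x y : V} (hxy : x ≠ y)
    (hy : G.IsClique (G.neighborSet y)) (hproper : ∀ S, S ≠ Set.univ → PerfDivOn G S) :
    PerfDivOn G Set.univ := by
  intro H _ hH
  by_cases hHuniv : H = Set.univ
  · subst hHuniv
    obtain ⟨A, B, hAB, hdisj, hA, hB⟩ := hproper {y}ᶜ
      (Set.compl_ne_univ.mpr (Set.singleton_nonempty y)) {y}ᶜ subset_rfl ⟨x, hxy⟩
    refine ⟨A ∪ {y}, B, ?_, ?_, hA.union_singleton hy,
      hB.trans_le (omegaOn_mono (Set.subset_univ _))⟩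
    · rw [Set.union_right_comm, hAB, Set.compl_union_self]
    · refine Set.disjoint_union_left.mpr ⟨hdisj, Set.disjoint_singleton_left.mpr fun hyB => ?_⟩
      exact (hAB ▸ Or.inr hyB : y ∈ ({y}ᶜ : Set V)) rfl
  · exact hproper H hHuniv H subset_rfl hH

theorem MNPD.not_isClique_neighborSet (hG : MNPD G) {x y : V} (hxy : x ≠ y) :
    ¬ G.IsClique (G.neighborSet y) :=
  fun hy => hG.1 (perfDivOn_univ_of_isClique_neighborSet hxy hy hG.2)

end Simplicial

theorem DiamondFree.isClique_neighborSet {G : SimpleGraph V} (hfree : DiamondFree G) {x y : V}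
    (hxy : G.Adj x y) (h : ∀ u, G.Adj y u → u ≠ x → G.Adj x u) :
    G.IsClique (G.neighborSet y) := by
  intro u (hu : G.Adj y u) w (hw : G.Adj y w) huw
  by_cases hux : u = x
  · exact hux ▸ h w hw (fun hwx => huw (hux.trans hwx.symm))
  by_cases hwx : w = x
  · exact hwx ▸ (h u hu hux).symm
  by_contra huw'
  refine hfree ⟨x, y, u, w, ?_, hxy, h u hu hux, h w hw hwx, hu, hw, huw'⟩
  simp only [List.nodup_cons, List.mem_cons, List.not_mem_nil, or_false, List.nodup_nil,
    and_true, not_or]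
  exact ⟨⟨hxy.ne, Ne.symm hux, Ne.symm hwx⟩, ⟨hu.ne, hw.ne⟩, huw, not_false⟩

theorem stmt_18 [Fintype V] (G : SimpleGraph V) (hfree : DiamondFree G)
    (hG : MNPD G) :
    ¬ ∃ x y : V, x ≠ y ∧ G.Adj x y ∧ (∃ z : V, z ≠ x ∧ z ≠ y) ∧
      (∀ v : V, v ≠ x → v ≠ y →
        ((G.Adj v x ∧ G.Adj v y) ∨ (¬ G.Adj v x ∧ ¬ G.Adj v y))) := by
  rintro ⟨x, y, hxy, hadj, -, hhom⟩
  refine hG.not_isClique_neighborSet hxy (hfree.isClique_neighborSet hadj fun u hu hux => ?_)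
  exact ((hhom u hux hu.ne').resolve_right fun h => h.2 hu.symm).1.symm
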